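/- Let s₀ = 1 + 2√3/3 + √6/2 (≈ 3.37945). There exist four points p₀, p₁, p₂, p₃ in ℝ³ whose pairwise distances all equal s₀ and whose convex hull contains the closed unit cube [0,1]³; consequently there is a regular tetrahedron of edge s₀ (of volume √2·s₀³/12 ≈ 4.5485) containing a unit cube. -/

import Mathlib

/-!
The tetrahedron stands on the plane `x₂ = 0`, its base an equilateral triangle centred at
`(1/2, 1/3 + √3/6, 0)`, and the cube stands on the base. The edge `s₀` is the one for which the top
edge `{x₁ = 0, x₂ = 1}` of the cube lies on one lateral face and the top vertices `(0,1,1)`,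
`(1,1,1)` on the other two. The barycentric coordinates of a point `x` of the cube are then
nonnegative combinations of the `x i` and `1 - x i`, hence nonnegative.
-/

/-- The closed unit cube `[0,1]³` in `ℝ³`. -/
def unitCube : Set (EuclideanSpace ℝ (Fin 3)) :=
  {p | ∀ i, p i ∈ Set.Icc (0 : ℝ) 1}

open Real Set

theorem add_sum_smul_mem_convexHull {𝕜 ι E : Type*} [Field 𝕜] [LinearOrder 𝕜]
    [IsStrictOrderedRing 𝕜] [Fintype ι] [AddCommGroup E] [Module 𝕜 E]
    (a : E) (v : ι → E) {c : ι → 𝕜} (hc : ∀ i, 0 ≤ c i) (hpos : 0 < ∑ i, c i) :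
    a + ∑ i, c i • v i ∈ convexHull 𝕜 (range fun i => a + (∑ j, c j) • v i) := by
  set S := ∑ j, c j
  have hw : ∑ i, c i / S = 1 := by rw [← Finset.sum_div, div_self hpos.ne']
  convert (convex_convexHull 𝕜 _).sum_mem (fun i _ => div_nonneg (hc i) hpos.le) hw
    (fun i _ => subset_convexHull 𝕜 _ (mem_range_self i)) using 1
  simp only [smul_add, Finset.sum_add_distrib, ← Finset.sum_smul, hw, one_smul, smul_smul]
  congr 1
  exact Finset.sum_congr rfl fun i _ => by rw [div_mul_cancel₀ _ hpos.ne']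

noncomputable def unitTetrahedron : Fin 4 → EuclideanSpace ℝ (Fin 3) :=
  ![!₂[-1 / 2, -√3 / 6, 0], !₂[1 / 2, -√3 / 6, 0], !₂[0, √3 / 3, 0], !₂[0, 0, √6 / 3]]

theorem dist_unitTetrahedron {i j : Fin 4} (hij : i ≠ j) :
    dist (unitTetrahedron i) (unitTetrahedron j) = 1 := by
  have h3 : √3 ^ 2 = 3 := sq_sqrt (by norm_num)
  have h6 : √6 ^ 2 = 6 := sq_sqrt (by norm_num)
  rw [EuclideanSpace.dist_eq, sqrt_eq_one, Fin.sum_univ_three]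
  fin_cases i <;> fin_cases j <;> first | exact absurd rfl hij |
    (simp only [unitTetrahedron, Fin.zero_eta, Fin.mk_one, Fin.reduceFinMk, Matrix.cons_val_zero,
        Matrix.cons_val_one, Matrix.cons_val, Real.dist_eq, sq_abs]
     linarith)

noncomputable def baseCenter : EuclideanSpace ℝ (Fin 3) := !₂[1 / 2, 1 / 3 + √3 / 6, 0]

/-- `s₀` times the barycentric coordinates of `x` with respect to the vertices
`baseCenter + s₀ • unitTetrahedron i`. -/
noncomputable def cubeCoord (x : EuclideanSpace ℝ (Fin 3)) : Fin 4 → ℝ :=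
  ![(1 - x 0) + √3 / 3 * (1 - x 1) + √6 / 6 * (1 - x 2),
    x 0 + √3 / 3 * (1 - x 1) + √6 / 6 * (1 - x 2),
    2 * √3 / 3 * x 1 + √6 / 6 * (1 - x 2),
    √6 / 2 * x 2]

theorem cubeCoord_nonneg {x : EuclideanSpace ℝ (Fin 3)} (hx : x ∈ unitCube) (i : Fin 4) :
    0 ≤ cubeCoord x i := by
  have h : ∀ k, 0 ≤ x k ∧ 0 ≤ 1 - x k := fun k => ⟨(hx k).1, sub_nonneg.2 (hx k).2⟩
  obtain ⟨h0, h0'⟩ := h 0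
  obtain ⟨h1, h1'⟩ := h 1
  obtain ⟨h2, h2'⟩ := h 2
  fin_cases i <;>
    simp only [cubeCoord, Fin.zero_eta, Fin.mk_one, Fin.reduceFinMk, Matrix.cons_val_zero,
      Matrix.cons_val_one, Matrix.cons_val] <;>
    positivity

theorem sum_cubeCoord (x : EuclideanSpace ℝ (Fin 3)) :
    ∑ i, cubeCoord x i = 1 + 2 * √3 / 3 + √6 / 2 := by
  simp only [cubeCoord, Fin.sum_univ_four, Matrix.cons_val_zero, Matrix.cons_val_one,
    Matrix.cons_val]
  ring

theorem baseCenter_add_sum_cubeCoord_smul (x : EuclideanSpace ℝ (Fin 3)) :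
    baseCenter + ∑ i, cubeCoord x i • unitTetrahedron i = x := by
  have h3 : √3 ^ 2 = 3 := sq_sqrt (by norm_num)
  have h6 : √6 ^ 2 = 6 := sq_sqrt (by norm_num)
  ext k
  fin_cases k <;>
    simp only [Fin.zero_eta, Fin.mk_one, Fin.reduceFinMk, baseCenter, cubeCoord, unitTetrahedron,
      Fin.sum_univ_four, Matrix.cons_val_zero, Matrix.cons_val_one, Matrix.cons_val,
      PiLp.add_apply, PiLp.smul_apply, smul_eq_mul, mul_zero, add_zero, zero_add]
  · ring
  · linear_combination (x 1 / 3 - 1 / 9) * h3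
  · linear_combination x 2 / 6 * h6

theorem exists_regular_tetrahedron_containing_unit_cube :
    ∃ p : Fin 4 → EuclideanSpace ℝ (Fin 3),
      (∀ i j, i ≠ j →
        dist (p i) (p j) = 1 + 2 * Real.sqrt 3 / 3 + Real.sqrt 6 / 2) ∧
      unitCube ⊆ convexHull ℝ (Set.range p) := by
  set s := 1 + 2 * √3 / 3 + √6 / 2
  have hs : 0 < s := by positivity
  refine ⟨fun i => baseCenter + s • unitTetrahedron i, fun i j hij => ?_, fun x hx => ?_⟩
  · rw [dist_add_left, dist_smul₀, dist_unitTetrahedron hij, Real.norm_of_nonneg hs.le, mul_one]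
  · have h := add_sum_smul_mem_convexHull baseCenter unitTetrahedron (cubeCoord_nonneg hx)
      (sum_cubeCoord x ▸ hs)
    rwa [sum_cubeCoord, baseCenter_add_sum_cubeCoord_smul] at h
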